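/- Let Ψ be a three-qubit pure state (a unit vector in ℂ²⊗ℂ²⊗ℂ²), with single-party reduced density matrices ρ_A, ρ_B, ρ_C, two-party reduced density matrices ρ_AB and ρ_BC, and third-order negativity I₅(Ψ) = Tr[(ρ_BC^Γ)³]. Then 69 − Tr[(2ρ_AB + ρ_A⊗I₂ + I₂⊗ρ_B)³] − 3·Tr(ρ_AB²) = 93 − 12·I₅(Ψ) − 27·(Tr(ρ_A²) + Tr(ρ_B²) + Tr(ρ_C²)). -/
import Mathlib


open scoped BigOperators Kronecker
open Matrix

noncomputable section

abbrev Q3 : Type := Fin 2 × Fin 2 × Fin 2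

/-- Partial transpose over the second tensor factor. -/
def ptranspose {d d' : ℕ} (M : Matrix (Fin d × Fin d') (Fin d × Fin d') ℂ) :
    Matrix (Fin d × Fin d') (Fin d × Fin d') ℂ :=
  fun p q => M (p.1, q.2) (q.1, p.2)

/-- Two-party reduced density matrix `ρ_AB` of a three-qubit pure state. -/
def rhoAB (Ψ : Q3 → ℂ) : Matrix (Fin 2 × Fin 2) (Fin 2 × Fin 2) ℂ :=
  fun p q => ∑ c : Fin 2, Ψ (p.1, p.2, c) * (starRingEnd ℂ) (Ψ (q.1, q.2, c))

/-- Two-party reduced density matrix `ρ_BC` of a three-qubit pure state. -/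
def rhoBC (Ψ : Q3 → ℂ) : Matrix (Fin 2 × Fin 2) (Fin 2 × Fin 2) ℂ :=
  fun p q => ∑ a : Fin 2, Ψ (a, p.1, p.2) * (starRingEnd ℂ) (Ψ (a, q.1, q.2))

/-- Single-party reduced density matrix `ρ_A`. -/
def rhoA (Ψ : Q3 → ℂ) : Matrix (Fin 2) (Fin 2) ℂ :=
  fun a a' => ∑ b : Fin 2, ∑ c : Fin 2, Ψ (a, b, c) * (starRingEnd ℂ) (Ψ (a', b, c))

/-- Single-party reduced density matrix `ρ_B`. -/
def rhoB (Ψ : Q3 → ℂ) : Matrix (Fin 2) (Fin 2) ℂ :=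
  fun b b' => ∑ a : Fin 2, ∑ c : Fin 2, Ψ (a, b, c) * (starRingEnd ℂ) (Ψ (a, b', c))

/-- Single-party reduced density matrix `ρ_C`. -/
def rhoC (Ψ : Q3 → ℂ) : Matrix (Fin 2) (Fin 2) ℂ :=
  fun c c' => ∑ a : Fin 2, ∑ b : Fin 2, Ψ (a, b, c) * (starRingEnd ℂ) (Ψ (a, b, c'))

/-- Third-order negativity of a three-qubit pure state. -/
def I5 (Ψ : Q3 → ℂ) : ℝ :=
  ((ptranspose (rhoBC Ψ)) ^ 3).trace.re

set_option maxHeartbeats 4000000 in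
lemma key_identity (Ψ : Q3 → ℂ) :
    (((2 : ℂ) • rhoAB Ψ + rhoA Ψ ⊗ₖ (1 : Matrix (Fin 2) (Fin 2) ℂ)
        + (1 : Matrix (Fin 2) (Fin 2) ℂ) ⊗ₖ rhoB Ψ) ^ 3).trace
      + 3 * (∑ v : Q3, Ψ v * (starRingEnd ℂ) (Ψ v)) * ((rhoAB Ψ) ^ 2).trace
    = 12 * ((ptranspose (rhoBC Ψ)) ^ 3).trace
      + 27 * (∑ v : Q3, Ψ v * (starRingEnd ℂ) (Ψ v))
          * (((rhoA Ψ) ^ 2).trace + ((rhoB Ψ) ^ 2).trace + ((rhoC Ψ) ^ 2).trace)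
      - 24 * (∑ v : Q3, Ψ v * (starRingEnd ℂ) (Ψ v)) ^ 3 := by
  simp only [pow_succ, pow_zero, one_mul, Matrix.trace, Matrix.diag, Matrix.mul_apply,
    Matrix.add_apply, Matrix.smul_apply, Matrix.kroneckerMap_apply,
    Matrix.one_apply, rhoAB, rhoBC, rhoA, rhoB, rhoC, ptranspose,
    Fintype.sum_prod_type, Fin.sum_univ_two, smul_eq_mul]
  norm_num [Fin.sum_univ_two]
  ring

theorem phi_expansion
    (Ψ : Q3 → ℂ) (hΨ : ∑ v : Q3, ‖Ψ v‖ ^ 2 = 1) :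
    69 - ((((2 : ℂ) • rhoAB Ψ + rhoA Ψ ⊗ₖ (1 : Matrix (Fin 2) (Fin 2) ℂ)
            + (1 : Matrix (Fin 2) (Fin 2) ℂ) ⊗ₖ rhoB Ψ) ^ 3).trace).re
        - 3 * (((rhoAB Ψ) ^ 2).trace).re
      = 93 - 12 * I5 Ψ
          - 27 * ((((rhoA Ψ) ^ 2).trace).re + (((rhoB Ψ) ^ 2).trace).re
              + (((rhoC Ψ) ^ 2).trace).re) := by
  have hN : (∑ v : Q3, Ψ v * (starRingEnd ℂ) (Ψ v)) = 1 := by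
    have : (∑ v : Q3, Ψ v * (starRingEnd ℂ) (Ψ v))
        = ((∑ v : Q3, ‖Ψ v‖ ^ 2 : ℝ) : ℂ) := by
      push_cast
      refine Finset.sum_congr rfl fun v _ => ?_
      rw [Complex.mul_conj]
      norm_cast
      rw [Complex.normSq_eq_norm_sq, Complex.sq_norm (Ψ v)]
    rw [this, hΨ]
    norm_num
  have hkey := key_identity Ψ
  rw [hN] at hkey
  have hre := congrArg Complex.re hkey
  simp only [Complex.add_re, Complex.sub_re, Complex.mul_re, Complex.ofReal_re,
    Complex.one_re, Complex.one_im, Complex.mul_im, Complex.ofReal_im] at hre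
  norm_num [I5] at hre ⊢
  linarith

end
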